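/- arXiv:2409.13974 — 6 statements merged into one kernel-verified Lean document; each statement's English description precedes it below -/
import Mathlib

section
/- If the function c ↦ Φ(y,λ,c) is non-decreasing for every y ∈ Y and λ ∈ Λ (axiom (A7)), and (λ_*, c_*) is a globally optimal solution of the dual problem, then for every c ≥ c_*, Θ(λ_*, c) = Θ(λ_*, c_*) and (λ_*, c) is also a globally optimal solution of the dual problem. -/
open Filter Topology Metric Set

noncomputable section

variable {X Y : Type*} [NormedAddCommGroup X] [NormedSpace ℝ X]
  [NormedAddCommGroup Y] [NormedSpace ℝ Y]

/-- Augmented Lagrangian `𝓛(x, λ, c) = f(x) + Φ(G(x), λ, c)`. -/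
def lagr (f : X → EReal) (G : X → Y) (Φ : Y → (Y →L[ℝ] ℝ) → ℝ → EReal)
    (x : X) (l : Y →L[ℝ] ℝ) (c : ℝ) : EReal :=
  f x + Φ (G x) l c

/-- Augmented dual function `Θ(λ, c) = inf_{x ∈ Q} 𝓛(x, λ, c)`. -/
def theta (Q : Set X) (f : X → EReal) (G : X → Y)
    (Φ : Y → (Y →L[ℝ] ℝ) → ℝ → EReal) (l : Y →L[ℝ] ℝ) (c : ℝ) : EReal :=
  ⨅ x ∈ Q, lagr f G Φ x l c

/-- Optimal value of the primal problem `min f(x) s.t. G(x) ∈ K, x ∈ Q`. -/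
def primalVal (Q : Set X) (K : Set Y) (f : X → EReal) (G : X → Y) : EReal :=
  ⨅ x ∈ {x ∈ Q | G x ∈ K}, f x

/-- Optimal value of the dual problem `max Θ(λ, c) over λ ∈ Λ, c > 0`. -/
def dualVal (Q : Set X) (Λ : Set (Y →L[ℝ] ℝ)) (f : X → EReal) (G : X → Y)
    (Φ : Y → (Y →L[ℝ] ℝ) → ℝ → EReal) : EReal :=
  ⨆ l ∈ Λ, ⨆ c ∈ Ioi (0 : ℝ), theta Q f G Φ l c

/-- `(l, c)` is a globally optimal solution of the dual problem. -/
def DualOpt (Q : Set X) (Λ : Set (Y →L[ℝ] ℝ)) (f : X → EReal) (G : X → Y)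
    (Φ : Y → (Y →L[ℝ] ℝ) → ℝ → EReal) (l : Y →L[ℝ] ℝ) (c : ℝ) : Prop :=
  l ∈ Λ ∧ 0 < c ∧ ∀ l' ∈ Λ, ∀ c' > (0 : ℝ), theta Q f G Φ l' c' ≤ theta Q f G Φ l c

/-- The saddle point inequalities hold for every `c ≥ c₀`. -/
def SaddleFrom (Q : Set X) (Λ : Set (Y →L[ℝ] ℝ)) (f : X → EReal) (G : X → Y)
    (Φ : Y → (Y →L[ℝ] ℝ) → ℝ → EReal) (x₀ : X) (l₀ : Y →L[ℝ] ℝ) (c₀ : ℝ) : Prop :=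
  ∀ c ≥ c₀, (⨆ l ∈ Λ, lagr f G Φ x₀ l c) ≤ lagr f G Φ x₀ l₀ c ∧
    lagr f G Φ x₀ l₀ c ≤ (⨅ x ∈ Q, lagr f G Φ x l₀ c) ∧
    (⨅ x ∈ Q, lagr f G Φ x l₀ c) < ⊤

/-- `(x₀, l₀)` is a global saddle point of the augmented Lagrangian. -/
def SaddlePt (Q : Set X) (Λ : Set (Y →L[ℝ] ℝ)) (f : X → EReal) (G : X → Y)
    (Φ : Y → (Y →L[ℝ] ℝ) → ℝ → EReal) (x₀ : X) (l₀ : Y →L[ℝ] ℝ) : Prop :=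
  x₀ ∈ Q ∧ l₀ ∈ Λ ∧ ∃ c₀ > (0 : ℝ), SaddleFrom Q Λ f G Φ x₀ l₀ c₀

/-- The least exact penalty parameter `c_*(x₀, l₀)` of a global saddle point. -/
def saddleCStar (Q : Set X) (Λ : Set (Y →L[ℝ] ℝ)) (f : X → EReal) (G : X → Y)
    (Φ : Y → (Y →L[ℝ] ℝ) → ℝ → EReal) (x₀ : X) (l₀ : Y →L[ℝ] ℝ) : ℝ :=
  sInf {c₀ : ℝ | 0 < c₀ ∧ SaddleFrom Q Λ f G Φ x₀ l₀ c₀}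

/-- `x₀` is a globally optimal solution of the primal problem. -/
def PrimalOpt (Q : Set X) (K : Set Y) (f : X → EReal) (G : X → Y) (x₀ : X) : Prop :=
  x₀ ∈ Q ∧ G x₀ ∈ K ∧ ∀ x ∈ Q, G x ∈ K → f x₀ ≤ f x

/-- If `Φ` is non-decreasing in the penalty parameter (axiom (A7)) and `(λ_*, c_*)` is a
globally optimal dual solution, then for every `c ≥ c_*`, `Θ(λ_*,c) = Θ(λ_*,c_*)` and
`(λ_*, c)` is also a globally optimal dual solution. -/
theorem dualOpt_of_le_penalty
    (Q : Set X) (Λ : Set (Y →L[ℝ] ℝ))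
    (f : X → EReal) (G : X → Y) (Φ : Y → (Y →L[ℝ] ℝ) → ℝ → EReal)
    (hA7 : ∀ y : Y, ∀ l ∈ Λ, ∀ c₁ c₂ : ℝ, 0 < c₁ → c₁ ≤ c₂ → Φ y l c₁ ≤ Φ y l c₂)
    (l₀ : Y →L[ℝ] ℝ) (c₀ : ℝ) (hopt : DualOpt Q Λ f G Φ l₀ c₀) :
    ∀ c ≥ c₀, theta Q f G Φ l₀ c = theta Q f G Φ l₀ c₀ ∧ DualOpt Q Λ f G Φ l₀ c := by
  obtain ⟨hl, hc0, hmax⟩ := hopt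
  intro c hc
  have hcpos : 0 < c := lt_of_lt_of_le hc0 hc
  have hmono : theta Q f G Φ l₀ c₀ ≤ theta Q f G Φ l₀ c := by
    refine iInf_mono fun x => iInf_mono fun _ => ?_
    exact add_le_add le_rfl (hA7 (G x) l₀ hl c₀ c hc0 hc)
  have heq : theta Q f G Φ l₀ c = theta Q f G Φ l₀ c₀ :=
    le_antisymm (hmax l₀ hl c hcpos) hmono
  exact ⟨heq, hl, hcpos, fun l' hl' c' hc' => heq ▸ hmax l' hl' c' hc'⟩
end
end

section
/- If Φ(y,λ,c) is non-decreasing in c (A7), concave in λ for each fixed (y,c) (A9), and the dual problem has a globally optimal solution, then the domain of the penalty map c_*(·) is convex and the penalty map c_*(λ) = inf{c > 0 : (λ,c) is a globally optimal dual solution} is a quasiconvex function: c_*(αλ₁ + (1-α)λ₂) ≤ max{c_*(λ₁), c_*(λ₂)} for λ₁, λ₂ ∈ dom c_* and α ∈ [0,1]. -/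
open Filter Topology Metric Set

noncomputable section

variable {X Y : Type*} [NormedAddCommGroup X] [NormedSpace ℝ X]
  [NormedAddCommGroup Y] [NormedSpace ℝ Y]

/-- The penalty map `c_*(λ) = inf {c > 0 : (λ,c) is a globally optimal dual solution}`,
with value `⊤` when no such `c` exists. -/
def penaltyMap (Q : Set X) (Λ : Set (Y →L[ℝ] ℝ)) (f : X → EReal) (G : X → Y)
    (Φ : Y → (Y →L[ℝ] ℝ) → ℝ → EReal) (l : Y →L[ℝ] ℝ) : EReal :=
  sInf (Real.toEReal '' {c : ℝ | DualOpt Q Λ f G Φ l c})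

/-! If `(l₁, c₁)` and `(l₂, c₂)` are optimal dual pairs, so is `(a • l₁ + b • l₂, max c₁ c₂)`:
by (A7) both `Θ(lᵢ, max c₁ c₂)` still attain the optimal value, and by (A9) the Lagrangian at
the combined multiplier dominates a convex combination, hence the minimum, of those at `l₁`
and `l₂`. Taking infima over `c₁` and `c₂` gives quasiconvexity of `c_*`. -/

lemma EReal.min_le_convexComb (p q : EReal) {a b : ℝ} (ha : 0 ≤ a) (hb : 0 ≤ b)
    (hab : a + b = 1) : min p q ≤ (a : EReal) * p + (b : EReal) * q := by
  have ha' : (0 : EReal) ≤ a := by exact_mod_cast ha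
  have hb' : (0 : EReal) ≤ b := by exact_mod_cast hb
  calc min p q = ((a : EReal) + b) * min p q := by
        rw [← EReal.coe_add, hab, EReal.coe_one, one_mul]
    _ = (a : EReal) * min p q + (b : EReal) * min p q :=
        EReal.right_distrib_of_nonneg ha' hb'
    _ ≤ (a : EReal) * p + (b : EReal) * q :=
        add_le_add (mul_le_mul_of_nonneg_left (min_le_left p q) ha')
          (mul_le_mul_of_nonneg_left (min_le_right p q) hb')

lemma EReal.sInf_image_coe_le_max {S S₁ S₂ : Set ℝ}
    (h : ∀ c₁ ∈ S₁, ∀ c₂ ∈ S₂, max c₁ c₂ ∈ S) :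
    sInf (Real.toEReal '' S) ≤ max (sInf (Real.toEReal '' S₁)) (sInf (Real.toEReal '' S₂)) := by
  refine le_of_forall_gt fun e he => ?_
  obtain ⟨_, ⟨c₁, hc₁, rfl⟩, hc₁e⟩ := sInf_lt_iff.1 ((le_max_left _ _).trans_lt he)
  obtain ⟨_, ⟨c₂, hc₂, rfl⟩, hc₂e⟩ := sInf_lt_iff.1 ((le_max_right _ _).trans_lt he)
  calc sInf (Real.toEReal '' S) ≤ (max c₁ c₂ : ℝ) := sInf_le ⟨_, h c₁ hc₁ c₂ hc₂, rfl⟩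
    _ = max (c₁ : EReal) c₂ := EReal.coe_strictMono.monotone.map_max
    _ < e := max_lt hc₁e hc₂e

section DualProblem

variable {X : Type*} {Q : Set X} {Λ : Set (Y →L[ℝ] ℝ)} {f : X → EReal} {G : X → Y}
  {Φ : Y → (Y →L[ℝ] ℝ) → ℝ → EReal}

lemma theta_mono
    (hA7 : ∀ y : Y, ∀ l ∈ Λ, ∀ c₁ c₂ : ℝ, 0 < c₁ → c₁ ≤ c₂ → Φ y l c₁ ≤ Φ y l c₂)
    {l : Y →L[ℝ] ℝ} (hl : l ∈ Λ) {c₁ c₂ : ℝ} (hc₁ : 0 < c₁) (hle : c₁ ≤ c₂) :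
    theta Q f G Φ l c₁ ≤ theta Q f G Φ l c₂ :=
  iInf₂_mono fun x _ => add_le_add_right (hA7 (G x) l hl c₁ c₂ hc₁ hle) (f x)

lemma min_theta_le_theta_convexComb
    (hA9 : ∀ (y : Y) (c : ℝ), 0 < c → ∀ l₁ ∈ Λ, ∀ l₂ ∈ Λ, ∀ a b : ℝ, 0 ≤ a → 0 ≤ b →
      a + b = 1 →
      (a : EReal) * Φ y l₁ c + (b : EReal) * Φ y l₂ c ≤ Φ y (a • l₁ + b • l₂) c)
    {l₁ l₂ : Y →L[ℝ] ℝ} (hl₁ : l₁ ∈ Λ) (hl₂ : l₂ ∈ Λ) {c : ℝ} (hc : 0 < c)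
    {a b : ℝ} (ha : 0 ≤ a) (hb : 0 ≤ b) (hab : a + b = 1) :
    min (theta Q f G Φ l₁ c) (theta Q f G Φ l₂ c) ≤ theta Q f G Φ (a • l₁ + b • l₂) c := by
  refine le_iInf₂ fun x hx => ?_
  calc min (theta Q f G Φ l₁ c) (theta Q f G Φ l₂ c)
        ≤ min (lagr f G Φ x l₁ c) (lagr f G Φ x l₂ c) :=
        min_le_min (iInf₂_le x hx) (iInf₂_le x hx)
    _ = f x + min (Φ (G x) l₁ c) (Φ (G x) l₂ c) := min_add_add_left _ _ _
    _ ≤ lagr f G Φ x (a • l₁ + b • l₂) c :=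
        add_le_add_right ((EReal.min_le_convexComb _ _ ha hb hab).trans
          (hA9 (G x) c hc l₁ hl₁ l₂ hl₂ a b ha hb hab)) (f x)

lemma DualOpt.convexComb_max (hΛconv : Convex ℝ Λ)
    (hA7 : ∀ y : Y, ∀ l ∈ Λ, ∀ c₁ c₂ : ℝ, 0 < c₁ → c₁ ≤ c₂ → Φ y l c₁ ≤ Φ y l c₂)
    (hA9 : ∀ (y : Y) (c : ℝ), 0 < c → ∀ l₁ ∈ Λ, ∀ l₂ ∈ Λ, ∀ a b : ℝ, 0 ≤ a → 0 ≤ b →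
      a + b = 1 →
      (a : EReal) * Φ y l₁ c + (b : EReal) * Φ y l₂ c ≤ Φ y (a • l₁ + b • l₂) c)
    {l₁ l₂ : Y →L[ℝ] ℝ} {c₁ c₂ : ℝ}
    (h₁ : DualOpt Q Λ f G Φ l₁ c₁) (h₂ : DualOpt Q Λ f G Φ l₂ c₂)
    {a b : ℝ} (ha : 0 ≤ a) (hb : 0 ≤ b) (hab : a + b = 1) :
    DualOpt Q Λ f G Φ (a • l₁ + b • l₂) (max c₁ c₂) := by
  obtain ⟨hl₁, hc₁, hopt₁⟩ := h₁
  obtain ⟨hl₂, hc₂, hopt₂⟩ := h₂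
  have hc : 0 < max c₁ c₂ := hc₁.trans_le (le_max_left _ _)
  refine ⟨hΛconv hl₁ hl₂ ha hb hab, hc, fun l' hl' c' hc' => ?_⟩
  calc theta Q f G Φ l' c'
        ≤ min (theta Q f G Φ l₁ (max c₁ c₂)) (theta Q f G Φ l₂ (max c₁ c₂)) :=
        le_min ((hopt₁ l' hl' c' hc').trans (theta_mono hA7 hl₁ hc₁ (le_max_left _ _)))
          ((hopt₂ l' hl' c' hc').trans (theta_mono hA7 hl₂ hc₂ (le_max_right _ _)))
    _ ≤ theta Q f G Φ (a • l₁ + b • l₂) (max c₁ c₂) :=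
        min_theta_le_theta_convexComb hA9 hl₁ hl₂ hc ha hb hab

end DualProblem

theorem penaltyMap_quasiconvex_general
    (Q : Set X) (Λ : Set (Y →L[ℝ] ℝ))
    (f : X → EReal) (G : X → Y) (Φ : Y → (Y →L[ℝ] ℝ) → ℝ → EReal)
    (hΛconv : Convex ℝ Λ)
    (hA7 : ∀ y : Y, ∀ l ∈ Λ, ∀ c₁ c₂ : ℝ, 0 < c₁ → c₁ ≤ c₂ → Φ y l c₁ ≤ Φ y l c₂)
    (hA9 : ∀ (y : Y) (c : ℝ), 0 < c → ∀ l₁ ∈ Λ, ∀ l₂ ∈ Λ, ∀ a b : ℝ, 0 ≤ a → 0 ≤ b →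
      a + b = 1 →
      (a : EReal) * Φ y l₁ c + (b : EReal) * Φ y l₂ c ≤ Φ y (a • l₁ + b • l₂) c) :
    Convex ℝ {l : Y →L[ℝ] ℝ | ∃ c, DualOpt Q Λ f G Φ l c} ∧
      ∀ l₁ ∈ {l : Y →L[ℝ] ℝ | ∃ c, DualOpt Q Λ f G Φ l c},
        ∀ l₂ ∈ {l : Y →L[ℝ] ℝ | ∃ c, DualOpt Q Λ f G Φ l c},
          ∀ a b : ℝ, 0 ≤ a → 0 ≤ b → a + b = 1 →
            penaltyMap Q Λ f G Φ (a • l₁ + b • l₂) ≤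
              max (penaltyMap Q Λ f G Φ l₁) (penaltyMap Q Λ f G Φ l₂) := by
  constructor
  · rintro l₁ ⟨c₁, h₁⟩ l₂ ⟨c₂, h₂⟩ a b ha hb hab
    exact ⟨max c₁ c₂, h₁.convexComb_max hΛconv hA7 hA9 h₂ ha hb hab⟩
  · intro l₁ _ l₂ _ a b ha hb hab
    exact EReal.sInf_image_coe_le_max fun c₁ h₁ c₂ h₂ =>
      h₁.convexComb_max hΛconv hA7 hA9 h₂ ha hb hab

/-- Under (A7) and (A9), if the dual problem has a globally optimal solution, then
the domain of the penalty map is convex and the penalty map is quasiconvex. -/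
theorem penaltyMap_quasiconvex
    (Q : Set X) (Λ : Set (Y →L[ℝ] ℝ))
    (f : X → EReal) (G : X → Y) (Φ : Y → (Y →L[ℝ] ℝ) → ℝ → EReal)
    (hΛconv : Convex ℝ Λ)
    (hA7 : ∀ y : Y, ∀ l ∈ Λ, ∀ c₁ c₂ : ℝ, 0 < c₁ → c₁ ≤ c₂ → Φ y l c₁ ≤ Φ y l c₂)
    (hA9 : ∀ (y : Y) (c : ℝ), 0 < c → ∀ l₁ ∈ Λ, ∀ l₂ ∈ Λ, ∀ a b : ℝ, 0 ≤ a → 0 ≤ b →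
      a + b = 1 →
      (a : EReal) * Φ y l₁ c + (b : EReal) * Φ y l₂ c ≤ Φ y (a • l₁ + b • l₂) c)
    (hex : ∃ l c, DualOpt Q Λ f G Φ l c) :
    Convex ℝ {l : Y →L[ℝ] ℝ | ∃ c, DualOpt Q Λ f G Φ l c} ∧
      ∀ l₁ ∈ {l : Y →L[ℝ] ℝ | ∃ c, DualOpt Q Λ f G Φ l c},
        ∀ l₂ ∈ {l : Y →L[ℝ] ℝ | ∃ c, DualOpt Q Λ f G Φ l c},
          ∀ a b : ℝ, 0 ≤ a → 0 ≤ b → a + b = 1 →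
            penaltyMap Q Λ f G Φ (a • l₁ + b • l₂) ≤
              max (penaltyMap Q Λ f G Φ l₁) (penaltyMap Q Λ f G Φ l₂) :=
  penaltyMap_quasiconvex_general Q Λ f G Φ hΛconv hA7 hA9
end
end

section
/- If (λ_*, c_*) is a globally optimal solution of the dual problem, the zero duality gap property holds, and assumptions (A1) and (A7) are satisfied, then for any globally optimal solution x_* of the primal problem the pair (x_*, λ_*) is a global saddle point of the augmented Lagrangian, and c_*(x_*,λ_*) ≤ c_*. -/
open Filter Topology Metric Set

/-! At an optimal dual pair `(λ_*, c_*)` the dual function equals `f_* = f(x_*)` for every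
`c ≥ c_*`: (A7) makes `Θ(λ_*, ·)` non-decreasing, and it cannot exceed its maximum. On the
other hand (A1) gives `𝓛(x_*, λ, c) ≤ f(x_*)` for every `λ`, while `Θ(λ_*, c) ≤ 𝓛(x_*, λ_*, c)`.
Hence `𝓛(x_*, λ_*, c) = f_* = Θ(λ_*, c)`, which is exactly the pair of saddle point
inequalities. -/

section SaddlePoint

variable {X Y : Type*} {Q : Set X} {K : Set Y} {f : X → EReal} {G : X → Y}

theorem PrimalOpt.primalVal_eq {x₀ : X} (hx₀ : PrimalOpt Q K f G x₀) :
    primalVal Q K f G = f x₀ :=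
  le_antisymm (iInf₂_le x₀ ⟨hx₀.1, hx₀.2.1⟩) (le_iInf₂ fun x hx => hx₀.2.2 x hx.1 hx.2)

variable [NormedAddCommGroup Y] [NormedSpace ℝ Y] {Λ : Set (Y →L[ℝ] ℝ)}
  {Φ : Y → (Y →L[ℝ] ℝ) → ℝ → EReal}

theorem DualOpt.dualVal_eq {l₀ : Y →L[ℝ] ℝ} {c₀ : ℝ} (hopt : DualOpt Q Λ f G Φ l₀ c₀) :
    dualVal Q Λ f G Φ = theta Q f G Φ l₀ c₀ :=
  le_antisymm (iSup₂_le fun l hl => iSup₂_le fun c hc => hopt.2.2 l hl c hc)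
    (le_iSup₂_of_le l₀ hopt.1 (le_iSup₂_of_le c₀ hopt.2.1 le_rfl))

theorem theta_le_theta_of_forall_le {l : Y →L[ℝ] ℝ} {c₁ c₂ : ℝ}
    (hΦ : ∀ x ∈ Q, Φ (G x) l c₁ ≤ Φ (G x) l c₂) :
    theta Q f G Φ l c₁ ≤ theta Q f G Φ l c₂ :=
  iInf₂_mono fun x hx => add_le_add_right (hΦ x hx) (f x)

theorem DualOpt.theta_eq_of_le {l₀ : Y →L[ℝ] ℝ} {c₀ c : ℝ} (hopt : DualOpt Q Λ f G Φ l₀ c₀)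
    (hA7 : ∀ y : Y, ∀ l ∈ Λ, ∀ c₁ c₂ : ℝ, 0 < c₁ → c₁ ≤ c₂ → Φ y l c₁ ≤ Φ y l c₂)
    (hc : c₀ ≤ c) :
    theta Q f G Φ l₀ c = theta Q f G Φ l₀ c₀ :=
  le_antisymm (hopt.2.2 l₀ hopt.1 c (hopt.2.1.trans_le hc))
    (theta_le_theta_of_forall_le fun x _ => hA7 (G x) l₀ hopt.1 c₀ c hopt.2.1 hc)

theorem lagr_le_of_feasible {x₀ : X} {l : Y →L[ℝ] ℝ} {c : ℝ}
    (hA1 : ∀ y ∈ K, ∀ l ∈ Λ, ∀ c : ℝ, 0 < c → Φ y l c ≤ 0)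
    (hGx₀ : G x₀ ∈ K) (hl : l ∈ Λ) (hc : 0 < c) :
    lagr f G Φ x₀ l c ≤ f x₀ :=
  calc lagr f G Φ x₀ l c ≤ f x₀ + 0 := add_le_add_right (hA1 (G x₀) hGx₀ l hl c hc) (f x₀)
    _ = f x₀ := add_zero _

theorem saddleFrom_of_theta_eq {x₀ : X} {l₀ : Y →L[ℝ] ℝ} {c₀ : ℝ}
    (hA1 : ∀ y ∈ K, ∀ l ∈ Λ, ∀ c : ℝ, 0 < c → Φ y l c ≤ 0)
    (hx₀ : x₀ ∈ Q) (hGx₀ : G x₀ ∈ K) (hl₀ : l₀ ∈ Λ) (hc₀ : 0 < c₀) (hfx₀ : f x₀ < ⊤)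
    (hθ : ∀ c ≥ c₀, theta Q f G Φ l₀ c = f x₀) :
    SaddleFrom Q Λ f G Φ x₀ l₀ c₀ := by
  intro c hc
  have hcpos : 0 < c := hc₀.trans_le hc
  have hθc : (⨅ x ∈ Q, lagr f G Φ x l₀ c) = f x₀ := hθ c hc
  have hlagr : lagr f G Φ x₀ l₀ c = f x₀ :=
    le_antisymm (lagr_le_of_feasible hA1 hGx₀ hl₀ hcpos) (hθc ▸ iInf₂_le x₀ hx₀)
  rw [hlagr, hθc]
  exact ⟨iSup₂_le fun l hl => lagr_le_of_feasible hA1 hGx₀ hl hcpos, le_rfl, hfx₀⟩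

theorem saddleCStar_le {x₀ : X} {l₀ : Y →L[ℝ] ℝ} {c₀ : ℝ} (hc₀ : 0 < c₀)
    (h : SaddleFrom Q Λ f G Φ x₀ l₀ c₀) :
    saddleCStar Q Λ f G Φ x₀ l₀ ≤ c₀ :=
  csInf_le ⟨0, fun _ hc => hc.1.le⟩ ⟨hc₀, h⟩

end SaddlePoint

variable {X Y : Type*} [NormedAddCommGroup X] [NormedSpace ℝ X]
  [NormedAddCommGroup Y] [NormedSpace ℝ Y]

theorem dualOpt_implies_saddlePoint_general
    (Q : Set X) (K : Set Y) (Λ : Set (Y →L[ℝ] ℝ))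
    (f : X → EReal) (G : X → Y) (Φ : Y → (Y →L[ℝ] ℝ) → ℝ → EReal)
    (hfin : ∃ r : ℝ, primalVal Q K f G = (r : EReal))
    (hA1 : ∀ y ∈ K, ∀ l ∈ Λ, ∀ c : ℝ, 0 < c → Φ y l c ≤ 0)
    (hA7 : ∀ y : Y, ∀ l ∈ Λ, ∀ c₁ c₂ : ℝ, 0 < c₁ → c₁ ≤ c₂ → Φ y l c₁ ≤ Φ y l c₂)
    (l₀ : Y →L[ℝ] ℝ) (c₀ : ℝ) (hopt : DualOpt Q Λ f G Φ l₀ c₀)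
    (hgap : dualVal Q Λ f G Φ = primalVal Q K f G)
    (x₀ : X) (hx₀ : PrimalOpt Q K f G x₀) :
    SaddlePt Q Λ f G Φ x₀ l₀ ∧ saddleCStar Q Λ f G Φ x₀ l₀ ≤ c₀ := by
  obtain ⟨r, hr⟩ := hfin
  have hfx₀ : f x₀ < ⊤ := by
    rw [← hx₀.primalVal_eq, hr]
    exact EReal.coe_lt_top r
  have hθ : ∀ c ≥ c₀, theta Q f G Φ l₀ c = f x₀ := fun c hc => by
    rw [hopt.theta_eq_of_le hA7 hc, ← hopt.dualVal_eq, hgap, hx₀.primalVal_eq]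
  have hsaddle : SaddleFrom Q Λ f G Φ x₀ l₀ c₀ :=
    saddleFrom_of_theta_eq hA1 hx₀.1 hx₀.2.1 hopt.1 hopt.2.1 hfx₀ hθ
  exact ⟨⟨hx₀.1, hopt.1, c₀, hopt.2.1, hsaddle⟩, saddleCStar_le hopt.2.1 hsaddle⟩

/-- If `(λ_*, c_*)` is a globally optimal dual solution, the zero duality gap property
holds, and axioms (A1) and (A7) are satisfied, then for any globally optimal primal
solution `x_*` the pair `(x_*, λ_*)` is a global saddle point, with
`c_*(x_*, λ_*) ≤ c_*`. -/
theorem dualOpt_implies_saddlePoint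
    (Q : Set X) (K : Set Y) (Λ : Set (Y →L[ℝ] ℝ))
    (f : X → EReal) (G : X → Y) (Φ : Y → (Y →L[ℝ] ℝ) → ℝ → EReal)
    (hQne : Q.Nonempty) (hQclosed : IsClosed Q)
    (hKclosed : IsClosed K) (hKconv : Convex ℝ K)
    (hKcone : ∀ y ∈ K, ∀ t : ℝ, 0 ≤ t → t • y ∈ K)
    (hfeas : {x ∈ Q | G x ∈ K}.Nonempty)
    (hfin : ∃ r : ℝ, primalVal Q K f G = (r : EReal))
    (hA1 : ∀ y ∈ K, ∀ l ∈ Λ, ∀ c : ℝ, 0 < c → Φ y l c ≤ 0)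
    (hA7 : ∀ y : Y, ∀ l ∈ Λ, ∀ c₁ c₂ : ℝ, 0 < c₁ → c₁ ≤ c₂ → Φ y l c₁ ≤ Φ y l c₂)
    (l₀ : Y →L[ℝ] ℝ) (c₀ : ℝ) (hopt : DualOpt Q Λ f G Φ l₀ c₀)
    (hgap : dualVal Q Λ f G Φ = primalVal Q K f G)
    (x₀ : X) (hx₀ : PrimalOpt Q K f G x₀) :
    SaddlePt Q Λ f G Φ x₀ l₀ ∧ saddleCStar Q Λ f G Φ x₀ l₀ ≤ c₀ :=
  dualOpt_implies_saddlePoint_general Q K Λ f G Φ hfin hA1 hA7 l₀ c₀ hopt hgap x₀ hx₀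
end

section
/- The optimal value function β(p) = inf{f(x) : x ∈ Q, G(x) - p ∈ K} is lower semicontinuous at the origin if and only if there does not exist a sequence {x_n} ⊆ Q with dist(G(x_n), K) → 0 and liminf_{n→∞} f(x_n) < f_*. -/
open Filter Topology Metric Set

noncomputable section

variable {X Y : Type*} [NormedAddCommGroup X] [NormedSpace ℝ X]
  [NormedAddCommGroup Y] [NormedSpace ℝ Y]

/-- The optimal value (perturbation) function `β(p) = inf {f(x) : x ∈ Q, G(x) - p ∈ K}`. -/
def betaFn (Q : Set X) (K : Set Y) (f : X → EReal) (G : X → Y) (p : Y) : EReal :=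
  ⨅ x ∈ {x ∈ Q | G x - p ∈ K}, f x

/-- The optimal value function `β` is lower semicontinuous at the origin if and only
if there is no sequence `{xₙ} ⊆ Q` with `dist(G(xₙ), K) → 0` and
`liminf f(xₙ) < f_* = β(0)`. -/
theorem optValFn_lsc_at_zero_iff
    (Q : Set X) (K : Set Y) (f : X → EReal) (G : X → Y)
    (hQne : Q.Nonempty) (hQclosed : IsClosed Q)
    (hKclosed : IsClosed K) (hKconv : Convex ℝ K)
    (hKcone : ∀ y ∈ K, ∀ t : ℝ, 0 ≤ t → t • y ∈ K)
    (hfeas : {x ∈ Q | G x ∈ K}.Nonempty)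
    (hfin : ∃ r : ℝ, betaFn Q K f G 0 = (r : EReal)) :
    LowerSemicontinuousAt (betaFn Q K f G) 0 ↔
      ¬ ∃ x : ℕ → X, (∀ n, x n ∈ Q) ∧
        Tendsto (fun n => infDist (G (x n)) K) atTop (𝓝 0) ∧
        liminf (fun n => f (x n)) atTop < betaFn Q K f G 0 := by
  constructor
  · rintro hlsc ⟨x, hxQ, hdist, hlim⟩
    obtain ⟨y, hy1, hy2⟩ := exists_between hlim
    have hev := hlsc y hy2
    have hKne : K.Nonempty := ⟨G hfeas.choose, hfeas.choose_spec.2⟩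
    have hz : ∀ n : ℕ, ∃ z ∈ K,
        dist (G (x n)) z < infDist (G (x n)) K + 1 / (n + 1) := by
      intro n
      exact (Metric.infDist_lt_iff hKne).1 (lt_add_of_pos_right _ (by positivity))
    choose z hzK hzd using hz
    set p : ℕ → Y := fun n => G (x n) - z n with hp
    have hpnorm : ∀ n, ‖p n‖ ≤ infDist (G (x n)) K + 1 / (n + 1) := by
      intro n
      have : ‖p n‖ = dist (G (x n)) (z n) := by
        rw [dist_eq_norm]
      rw [this]
      exact (hzd n).le
    have hp0 : Tendsto p atTop (𝓝 0) := by
      rw [tendsto_zero_iff_norm_tendsto_zero]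
      refine tendsto_of_tendsto_of_tendsto_of_le_of_le tendsto_const_nhds
        ?_ (fun n => norm_nonneg _) hpnorm
      have := hdist.add tendsto_one_div_add_atTop_nhds_zero_nat
      simpa using this
    have hβ : ∀ n, betaFn Q K f G (p n) ≤ f (x n) := by
      intro n
      refine iInf₂_le (x n) ⟨hxQ n, ?_⟩
      simp [hp, hzK n]
    have hevn : ∀ᶠ n in atTop, y ≤ f (x n) := by
      filter_upwards [hp0.eventually hev] with n hn
      exact le_trans (le_of_lt hn) (hβ n)
    have : y ≤ liminf (fun n => f (x n)) atTop := le_liminf_of_le (by isBoundedDefault) hevn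
    exact absurd this (not_le.2 hy1)
  · intro h y hy
    by_contra hcon
    rw [Filter.not_eventually] at hcon
    obtain ⟨y', hy'1, hy'2⟩ := exists_between hy
    have hseq : ∀ n : ℕ, ∃ p : Y, ‖p‖ < 1 / (n + 1) ∧ betaFn Q K f G p ≤ y := by
      intro n
      obtain ⟨p, hp1, hp2⟩ :=
        (Metric.nhds_basis_ball.frequently_iff).1 hcon (1 / (n + 1)) (by positivity)
      exact ⟨p, by simpa [dist_zero_right] using hp1, not_lt.1 hp2⟩
    choose p hp1 hp2 using hseq
    have hx : ∀ n : ℕ, ∃ xx, (xx ∈ Q ∧ G xx - p n ∈ K) ∧ f xx < y' := by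
      intro n
      have hlt : betaFn Q K f G (p n) < y' := lt_of_le_of_lt (hp2 n) hy'1
      rw [betaFn, iInf_lt_iff] at hlt
      obtain ⟨xx, hxx⟩ := hlt
      rw [iInf_lt_iff] at hxx
      obtain ⟨hmem, hfx⟩ := hxx
      exact ⟨xx, hmem, hfx⟩
    choose xx hxmem hxlt using hx
    refine h ⟨xx, fun n => (hxmem n).1, ?_, ?_⟩
    · have hle : ∀ n, infDist (G (xx n)) K ≤ 1 / (n + 1 : ℝ) := by
        intro n
        refine le_trans (Metric.infDist_le_dist_of_mem (hxmem n).2) ?_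
        have : dist (G (xx n)) (G (xx n) - p n) = ‖p n‖ := dist_self_sub_right _ _
        rw [this]
        exact (hp1 n).le
      refine tendsto_of_tendsto_of_tendsto_of_le_of_le tendsto_const_nhds
        tendsto_one_div_add_atTop_nhds_zero_nat
        (fun n => Metric.infDist_nonneg) hle
    · refine lt_of_le_of_lt ?_ hy'2
      refine liminf_le_of_le (by isBoundedDefault) ?_
      intro b hb
      obtain ⟨n, hn⟩ := hb.exists
      exact le_trans hn (hxlt n).le
end
end

section
/- Let Φ(y,λ,c) = Σ_{i=1}^m Φ_i(y_i,λ_i,c) be separable over a product of cones. If each Φ_i satisfies (A7) (non-decreasing in c) and (A12) (for each λ_i, c₀ > 0, r > 0, the quantity inf{Φ_i(y_i,λ_i,c) - Φ_i(y_i,λ_i,c₀) : dist(y_i,K_i) ≥ r, |Φ_i(y_i,λ_i,c₀)| < +∞} tends to +∞ as c → +∞), then Φ satisfies (A12) with respect to the product cone K = K₁ × … × K_m. -/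
open Filter Topology Metric Set

noncomputable section

lemma EReal.sum_ne_bot' {ι : Type*} (s : Finset ι) (f : ι → EReal)
    (h : ∀ i ∈ s, f i ≠ ⊥) : ∑ i ∈ s, f i ≠ ⊥ := by
  classical
  induction s using Finset.induction with
  | empty => simp
  | @insert a s' hi ih =>
    rw [Finset.sum_insert hi]
    simp only [ne_eq, EReal.add_eq_bot_iff, not_or]
    exact ⟨h a (Finset.mem_insert_self a s'),
      ih fun i hi' => h i (Finset.mem_insert_of_mem hi')⟩

lemma EReal.ne_bot_of_sum {ι : Type*} [DecidableEq ι] (s : Finset ι) (f : ι → EReal)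
    (h : ∑ i ∈ s, f i ≠ ⊥) : ∀ i ∈ s, f i ≠ ⊥ := by
  intro i hi hfi
  exact h ((Finset.add_sum_erase s f hi).symm.trans (by rw [hfi, EReal.bot_add]))

lemma EReal.ne_top_of_sum {ι : Type*} [DecidableEq ι] (s : Finset ι) (f : ι → EReal)
    (hb : ∑ i ∈ s, f i ≠ ⊥) (ht : ∑ i ∈ s, f i ≠ ⊤) : ∀ i ∈ s, f i ≠ ⊤ := by
  intro i hi hfi
  apply ht
  rw [← Finset.add_sum_erase s f hi, hfi]
  apply EReal.top_add_of_ne_bot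
  exact EReal.sum_ne_bot' _ _ (fun j hj =>
    EReal.ne_bot_of_sum s f hb j (Finset.mem_of_mem_erase hj))

/-- For a separable augmenting term `Φ(y,λ,c) = Σᵢ Φᵢ(yᵢ,λᵢ,c)` over a product of cones,
if each `Φᵢ` satisfies (A7) and (A12), then `Φ` satisfies (A12) with respect to the
product cone `K = K₁ × … × K_m`. -/
theorem separable_A12 {m : ℕ} (Yf : Fin m → Type*)
    [∀ i, NormedAddCommGroup (Yf i)] [∀ i, NormedSpace ℝ (Yf i)]
    (Kf : ∀ i, Set (Yf i)) (Λf : ∀ i, Set (Yf i →L[ℝ] ℝ))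
    (Φf : ∀ i, Yf i → (Yf i →L[ℝ] ℝ) → ℝ → EReal)
    (hKclosed : ∀ i, IsClosed (Kf i)) (hKconv : ∀ i, Convex ℝ (Kf i))
    (hKcone : ∀ i, ∀ y ∈ Kf i, ∀ t : ℝ, 0 ≤ t → t • y ∈ Kf i)
    (hA7 : ∀ i, ∀ (y : Yf i), ∀ l ∈ Λf i, ∀ c₁ c₂ : ℝ, 0 < c₁ → c₁ ≤ c₂ →
      Φf i y l c₁ ≤ Φf i y l c₂)
    (hA12 : ∀ i, ∀ l ∈ Λf i, ∀ c₀ > (0 : ℝ), ∀ r > (0 : ℝ),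
      Tendsto (fun c : ℝ =>
          ⨅ y ∈ {y : Yf i | r ≤ infDist y (Kf i) ∧
              Φf i y l c₀ ≠ ⊤ ∧ Φf i y l c₀ ≠ ⊥},
            (Φf i y l c - Φf i y l c₀))
        atTop (𝓝 (⊤ : EReal))) :
    ∀ (l : ∀ i, Yf i →L[ℝ] ℝ), (∀ i, l i ∈ Λf i) → ∀ c₀ > (0 : ℝ), ∀ r > (0 : ℝ),
      Tendsto (fun c : ℝ =>
          ⨅ y ∈ {y : ∀ i, Yf i | r ≤ infDist y (Set.univ.pi Kf) ∧
              (∑ i, Φf i (y i) (l i) c₀) ≠ ⊤ ∧ (∑ i, Φf i (y i) (l i) c₀) ≠ ⊥},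
            ((∑ i, Φf i (y i) (l i) c) - (∑ i, Φf i (y i) (l i) c₀)))
        atTop (𝓝 (⊤ : EReal)) := by
  classical
  intro l hl c₀ hc₀ r hr
  rw [EReal.tendsto_nhds_top_iff_real]
  intro M
  have Hall : ∀ᶠ c in atTop, c₀ ≤ c ∧ ∀ i, ((M + 1 : ℝ) : EReal) <
      ⨅ y ∈ {y : Yf i | r ≤ infDist y (Kf i) ∧
          Φf i y (l i) c₀ ≠ ⊤ ∧ Φf i y (l i) c₀ ≠ ⊥},
        (Φf i y (l i) c - Φf i y (l i) c₀) :=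
    (eventually_ge_atTop c₀).and (eventually_all.2 fun i =>
      (EReal.tendsto_nhds_top_iff_real.1
        (hA12 i (l i) (hl i) c₀ hc₀ r hr)) (M + 1))
  filter_upwards [Hall] with c hc
  obtain ⟨hcc₀, hMc⟩ := hc
  have key : ∀ y ∈ {y : ∀ i, Yf i | r ≤ infDist y (Set.univ.pi Kf) ∧
      (∑ i, Φf i (y i) (l i) c₀) ≠ ⊤ ∧ (∑ i, Φf i (y i) (l i) c₀) ≠ ⊥},
      ((M + 1 : ℝ) : EReal) ≤ (∑ i, Φf i (y i) (l i) c) - (∑ i, Φf i (y i) (l i) c₀) := by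
    rintro y ⟨hyd, hyt, hyb⟩
    have hb : ∀ i, Φf i (y i) (l i) c₀ ≠ ⊥ := fun i =>
      EReal.ne_bot_of_sum Finset.univ _ hyb i (Finset.mem_univ i)
    have ht : ∀ i, Φf i (y i) (l i) c₀ ≠ ⊤ := fun i =>
      EReal.ne_top_of_sum Finset.univ _ hyb hyt i (Finset.mem_univ i)
    obtain ⟨i₀, hi₀⟩ : ∃ i, r ≤ infDist (y i) (Kf i) := by
      rcases (Set.univ.pi Kf).eq_empty_or_nonempty with he | ⟨k₀, hk₀⟩
      · rw [he, infDist_empty] at hyd; linarith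
      · by_contra hcon
        push_neg at hcon
        have hne : ∀ i, (Kf i).Nonempty := fun i => ⟨k₀ i, hk₀ i (Set.mem_univ i)⟩
        choose k hk hdk using fun i => (infDist_lt_iff (hne i)).1 (hcon i)
        have hkmem : k ∈ Set.univ.pi Kf := fun i _ => hk i
        have : infDist y (Set.univ.pi Kf) < r :=
          lt_of_le_of_lt (infDist_le_dist_of_mem hkmem) ((dist_pi_lt_iff hr).2 hdk)
        linarith
    -- use A12 for index i₀
    have hmem : y i₀ ∈ {z : Yf i₀ | r ≤ infDist z (Kf i₀) ∧
        Φf i₀ z (l i₀) c₀ ≠ ⊤ ∧ Φf i₀ z (l i₀) c₀ ≠ ⊥} := ⟨hi₀, ht i₀, hb i₀⟩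
    have hlt : ((M + 1 : ℝ) : EReal) <
        Φf i₀ (y i₀) (l i₀) c - Φf i₀ (y i₀) (l i₀) c₀ :=
      lt_of_lt_of_le (hMc i₀) (iInf₂_le _ hmem)
    have hlt' : ((M + 1 : ℝ) : EReal) + Φf i₀ (y i₀) (l i₀) c₀ <
        Φf i₀ (y i₀) (l i₀) c :=
      (EReal.lt_sub_iff_add_lt (Or.inl (hb i₀)) (Or.inl (ht i₀))).1 hlt
    set g : Fin m → EReal := fun j =>
      if j = i₀ then ((M + 1 : ℝ) : EReal) + Φf j (y j) (l j) c₀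
      else Φf j (y j) (l j) c₀ with hg
    have hsum_le : ∑ j, g j ≤ ∑ j, Φf j (y j) (l j) c := by
      apply Finset.sum_le_sum
      intro j _
      by_cases hj : j = i₀
      · subst hj; simp only [hg, if_pos rfl]; exact le_of_lt hlt'
      · simp only [hg, if_neg hj]
        exact hA7 j (y j) (l j) (hl j) c₀ c hc₀ hcc₀
    have hsum_eq : ∑ j, g j = ((M + 1 : ℝ) : EReal) + ∑ j, Φf j (y j) (l j) c₀ := by
      rw [← Finset.add_sum_erase _ g (Finset.mem_univ i₀),
        ← Finset.add_sum_erase _ (fun j => Φf j (y j) (l j) c₀) (Finset.mem_univ i₀)]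
      have : ∑ j ∈ Finset.univ.erase i₀, g j
          = ∑ j ∈ Finset.univ.erase i₀, Φf j (y j) (l j) c₀ :=
        Finset.sum_congr rfl fun j hj => by
          simp only [hg, if_neg (Finset.ne_of_mem_erase hj)]
      rw [this]
      simp only [hg, if_pos rfl]
      rw [add_assoc]
    rw [EReal.le_sub_iff_add_le (Or.inl hyb) (Or.inl hyt)]
    calc ((M + 1 : ℝ) : EReal) + ∑ j, Φf j (y j) (l j) c₀ = ∑ j, g j := hsum_eq.symm
      _ ≤ ∑ j, Φf j (y j) (l j) c := hsum_le
  exact lt_of_lt_of_le (by exact_mod_cast (lt_add_one M)) (le_iInf₂ key)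
end
end

section
/- For the Rockafellar–Wets augmenting term Φ(y,λ,c) = inf_{p ∈ K - y}(-⟨λ,p⟩ + c σ(p)), suppose σ has a valley at zero (for every neighbourhood U of 0 there exists δ > 0 with σ(y) ≥ δ for all y ∉ U). Then for every c₀ > 0, r > 0 and every bounded Λ₀ ⊆ Y*: inf_{λ∈Λ₀} inf{Φ(y,λ,c) - Φ(y,λ,c₀) : y ∈ Y, dist(y,K) ≥ r, |Φ(y,λ,c₀)| < +∞} → +∞ as c → +∞ [axiom (A12)_s]. -/
open Filter Topology Metric Set
open scoped ENNReal

noncomputable section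

variable {Y : Type*} [NormedAddCommGroup Y] [NormedSpace ℝ Y]

/-- The Rockafellar–Wets augmenting term
`Φ(y,λ,c) = inf_{p ∈ K - y} (-⟨λ,p⟩ + c σ(p))`. -/
def rwPhi (K : Set Y) (σ : Y → ℝ≥0∞) (y : Y) (l : Y →L[ℝ] ℝ) (c : ℝ) : EReal :=
  ⨅ p ∈ {p : Y | y + p ∈ K}, (((-(l p) : ℝ) : EReal) + (c : EReal) * (σ p : EReal))

/-- If `σ` has a valley at zero, then the Rockafellar–Wets term satisfies axiom (A12)ₛ:
for every `c₀ > 0`, `r > 0` and bounded `Λ₀ ⊆ Y*`,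
`inf_{λ∈Λ₀} inf {Φ(y,λ,c) - Φ(y,λ,c₀) : dist(y,K) ≥ r, |Φ(y,λ,c₀)| < ∞} → +∞` as
`c → +∞`. -/
theorem rwPhi_A12s_of_valley
    (K : Set Y) (σ : Y → ℝ≥0∞)
    (hKclosed : IsClosed K) (hKconv : Convex ℝ K)
    (hKcone : ∀ y ∈ K, ∀ t : ℝ, 0 ≤ t → t • y ∈ K)
    (hσ0 : σ 0 = 0) (hσpos : ∀ y : Y, y ≠ 0 → σ y ≠ 0)
    (hvalley : ∀ U ∈ 𝓝 (0 : Y), ∃ δ : ℝ, 0 < δ ∧ ∀ y ∉ U, ENNReal.ofReal δ ≤ σ y) :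
    ∀ c₀ > (0 : ℝ), ∀ r > (0 : ℝ), ∀ Λ₀ : Set (Y →L[ℝ] ℝ), Bornology.IsBounded Λ₀ →
      Tendsto (fun c : ℝ =>
          ⨅ l ∈ Λ₀, ⨅ y ∈ {y : Y | r ≤ infDist y K ∧
              rwPhi K σ y l c₀ ≠ ⊤ ∧ rwPhi K σ y l c₀ ≠ ⊥},
            (rwPhi K σ y l c - rwPhi K σ y l c₀))
        atTop (𝓝 (⊤ : EReal)) := by
  intro c₀ hc₀ r hr Λ₀ _
  obtain ⟨δ, hδ, hδσ⟩ := hvalley (Metric.ball 0 r) (Metric.ball_mem_nhds 0 hr)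
  have key : ∀ c : ℝ, c₀ ≤ c →
      (((c - c₀) * δ : ℝ) : EReal) ≤
      ⨅ l ∈ Λ₀, ⨅ y ∈ {y : Y | r ≤ infDist y K ∧
          rwPhi K σ y l c₀ ≠ ⊤ ∧ rwPhi K σ y l c₀ ≠ ⊥},
        (rwPhi K σ y l c - rwPhi K σ y l c₀) := by
    intro c hc
    refine le_iInf₂ fun l _ => le_iInf₂ fun y hy => ?_
    obtain ⟨hyr, hnt, hnb⟩ := hy
    set a : ℝ := (rwPhi K σ y l c₀).toReal with ha
    have hacoe : ((a : ℝ) : EReal) = rwPhi K σ y l c₀ := EReal.coe_toReal hnt hnb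
    rw [← hacoe]
    rw [EReal.le_sub_iff_add_le (Or.inl (EReal.coe_ne_bot a)) (Or.inl (EReal.coe_ne_top a))]
    rw [rwPhi]
    refine le_iInf₂ fun p hp => ?_
    -- p is far from 0
    have hpnorm : r ≤ ‖p‖ := by
      have : infDist y K ≤ dist y (y + p) := infDist_le_dist_of_mem hp
      simpa [dist_eq_norm] using hyr.trans this
    have hpball : p ∉ Metric.ball (0 : Y) r := by
      simp [Metric.mem_ball, dist_eq_norm]
      linarith
    have hσp : ENNReal.ofReal δ ≤ σ p := hδσ p hpball
    by_cases htop : σ p = ⊤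
    · have : ((c : ℝ) : EReal) * (σ p : EReal) = ⊤ := by
        rw [htop, EReal.coe_ennreal_top]
        exact EReal.coe_mul_top_of_pos (lt_of_lt_of_le hc₀ hc)
      rw [this]
      simp [EReal.add_top_of_ne_bot]
    · -- σ p is a real number ≥ δ
      set s : ℝ := (σ p).toReal with hs
      have hscoe : ((σ p : EReal)) = ((s : ℝ) : EReal) := by
        conv_lhs => rw [← ENNReal.ofReal_toReal htop]
        rw [EReal.coe_ennreal_ofReal, max_eq_left ENNReal.toReal_nonneg]
      have hδs : δ ≤ s := by
        have := ENNReal.toReal_mono htop hσp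
        rwa [ENNReal.toReal_ofReal hδ.le] at this
      -- a ≤ -(l p) + c₀ * s
      have hale : (a : EReal) ≤ ((-(l p) + c₀ * s : ℝ) : EReal) := by
        rw [hacoe]
        have h1 : rwPhi K σ y l c₀ ≤ ((-(l p) : ℝ) : EReal) + (c₀ : EReal) * (σ p : EReal) :=
          iInf₂_le p hp
        refine h1.trans_eq ?_
        rw [hscoe]
        norm_cast
      have hale' : a ≤ -(l p) + c₀ * s := by exact_mod_cast hale
      calc ((c - c₀) * δ : ℝ) + (a : EReal)
          = (((c - c₀) * δ + a : ℝ) : EReal) := by norm_cast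
        _ ≤ ((-(l p) + c * s : ℝ) : EReal) := by
            apply EReal.coe_le_coe_iff.2
            have hcc : 0 ≤ c - c₀ := by linarith
            nlinarith [mul_le_mul_of_nonneg_left hδs hcc]
        _ = ((-(l p) : ℝ) : EReal) + (c : EReal) * (σ p : EReal) := by
            rw [hscoe]; norm_cast
  rw [EReal.tendsto_nhds_top_iff_real]
  intro x
  filter_upwards [eventually_ge_atTop (max c₀ (c₀ + (x + 1) / δ))] with c hcge
  have hc₁ : c₀ ≤ c := le_trans (le_max_left _ _) hcge
  have hc₂ : c₀ + (x + 1) / δ ≤ c := le_trans (le_max_right _ _) hcge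
  refine lt_of_lt_of_le ?_ (key c hc₁)
  apply EReal.coe_lt_coe_iff.2
  have h3 : (x + 1) / δ ≤ c - c₀ := by linarith
  rw [div_le_iff₀ hδ] at h3
  linarith
end
end
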